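/- arXiv:2002.12421 — 3 statements merged into one kernel-verified Lean document; each statement's English description precedes it below -/
import Mathlib

section
/- Let n ≥ 1 and let r, s be non-negative integers with 4^r(8s+1) ≤ 2^n. Then #B_{r,s,n} = 2^r · #B_{0,s,n−2r} ≤ 2^{r+2}. -/
/-- `B r s n` is the set of `k ∈ {1, …, 2^n}` with `k² ≡ 4^r (8 s + 1) (mod 2^n)`. -/
def B (r s n : ℕ) : Set ℤ :=
  {k : ℤ | 1 ≤ k ∧ k ≤ 2 ^ n ∧ k ^ 2 ≡ (4 : ℤ) ^ r * (8 * s + 1) [ZMOD 2 ^ n]}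

/-!
A root `k ∈ [1, 4h]` of `k² ≡ 4a (mod 4h)` is even, `k = 2m`, with `m ∈ [1, 2h]` and
`m² ≡ a (mod h)`; since `[1, 2h]` meets every residue class mod `h` twice, cancelling a
factor `4` from modulus and residue halves the number of roots.

For odd `a`, two roots `x, y` modulo `2^(m+2)` are odd, and of the two even numbers `y - x`
and `y + x` (whose sum is `2y`) one is twice an odd number; so the other carries the rest of
`2^(m+2) ∣ (y - x)(y + x)`, i.e. `x ≡ ±y (mod 2^(m+1))`. These two classes are each met twice
in `[1, 2^(m+2)]`, giving at most four roots.
-/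

open Finset Function

theorem card_filter_Icc_two_mul_of_periodic {p : ℤ → Prop} [DecidablePred p] {h : ℤ}
    (hp : Periodic p h) :
    #{k ∈ Icc 1 (2 * h) | p k} = 2 * #{k ∈ Icc 1 h | p k} := by
  have hsplit : {k ∈ Icc 1 (2 * h) | p k} =
      {k ∈ Icc 1 h | p k} ∪ {k ∈ Icc 1 h | p k}.map (addRightEmbedding h) := by
    ext k
    simp only [mem_union, mem_map, mem_filter, mem_Icc, addRightEmbedding_apply]
    constructor
    · rintro ⟨⟨hk1, hk2⟩, hpk⟩
      rcases le_or_gt k h with hkh | hkh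
      · exact Or.inl ⟨⟨hk1, hkh⟩, hpk⟩
      · refine Or.inr ⟨k - h, ⟨⟨by omega, by omega⟩, ?_⟩, by ring⟩
        rwa [← hp, sub_add_cancel]
    · rintro (⟨⟨hk1, hk2⟩, hpk⟩ | ⟨j, ⟨⟨hj1, hj2⟩, hpj⟩, rfl⟩)
      · exact ⟨⟨hk1, by omega⟩, hpk⟩
      · exact ⟨⟨by omega, by omega⟩, (hp j).symm ▸ hpj⟩
  rw [hsplit, card_union_of_disjoint, card_map, two_mul]
  simp only [disjoint_left, mem_map, mem_filter, mem_Icc, addRightEmbedding_apply]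
  rintro _ ⟨⟨-, hk⟩, -⟩ ⟨j, ⟨⟨hj, -⟩, -⟩, rfl⟩
  omega

theorem card_filter_Icc_two_mul_modEq_le_two (h c : ℤ) :
    #{k ∈ Icc 1 (2 * h) | k ≡ c [ZMOD h]} ≤ 2 := by
  have hone : #{k ∈ Icc 1 h | k ≡ c [ZMOD h]} ≤ 1 := by
    refine card_le_one.mpr fun x hx y hy => ?_
    simp only [mem_filter, mem_Icc] at hx hy
    have hdvd : h ∣ y - x := Int.modEq_iff_dvd.mp (hx.2.trans hy.2.symm)
    have := Int.eq_zero_of_abs_lt_dvd hdvd (abs_lt.mpr ⟨by omega, by omega⟩)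
    omega
  rw [card_filter_Icc_two_mul_of_periodic fun k => congrArg (· = c % h) Int.add_modEq_right]
  omega

noncomputable def sqrtsMod (m a : ℤ) : Finset ℤ := {k ∈ Icc 1 m | k ^ 2 ≡ a [ZMOD m]}

theorem two_dvd_of_sq_modEq_four_mul {k h a : ℤ} (hk : k ^ 2 ≡ 4 * a [ZMOD 4 * h]) :
    2 ∣ k := by
  have h4 : (4 : ℤ) ∣ k ^ 2 := Int.modEq_zero_iff_dvd.mp
    ((hk.of_mul_right h).trans (Int.modEq_zero_iff_dvd.mpr (dvd_mul_right 4 a)))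
  exact Int.prime_two.dvd_of_dvd_pow (dvd_trans ⟨2, by norm_num⟩ h4)

theorem sq_two_mul_modEq_four_mul_iff {m h a : ℤ} :
    (2 * m) ^ 2 ≡ 4 * a [ZMOD 4 * h] ↔ m ^ 2 ≡ a [ZMOD h] := by
  rw [Int.modEq_iff_dvd, Int.modEq_iff_dvd, show 4 * a - (2 * m) ^ 2 = 4 * (a - m ^ 2) by ring]
  exact mul_dvd_mul_iff_left (by norm_num)

theorem sqrtsMod_four_mul (h a : ℤ) :
    sqrtsMod (4 * h) (4 * a) = {m ∈ Icc 1 (2 * h) | m ^ 2 ≡ a [ZMOD h]}.map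
      ⟨(2 * ·), mul_right_injective₀ two_ne_zero⟩ := by
  ext k
  simp only [sqrtsMod, mem_filter, mem_map, mem_Icc, Embedding.coeFn_mk]
  constructor
  · rintro ⟨⟨hk1, hk2⟩, hk⟩
    obtain ⟨m, rfl⟩ := two_dvd_of_sq_modEq_four_mul hk
    exact ⟨m, ⟨⟨by omega, by omega⟩, sq_two_mul_modEq_four_mul_iff.mp hk⟩, rfl⟩
  · rintro ⟨m, ⟨⟨hm1, hm2⟩, hm⟩, rfl⟩
    exact ⟨⟨by omega, by omega⟩, sq_two_mul_modEq_four_mul_iff.mpr hm⟩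

theorem card_sqrtsMod_four_mul (h a : ℤ) :
    #(sqrtsMod (4 * h) (4 * a)) = 2 * #(sqrtsMod h a) := by
  rw [sqrtsMod_four_mul, card_map, sqrtsMod]
  exact card_filter_Icc_two_mul_of_periodic fun m =>
    congrArg (· = a % h) (Int.add_modEq_right.pow 2)

theorem card_sqrtsMod_four_pow_mul (r : ℕ) (h a : ℤ) :
    #(sqrtsMod (4 ^ r * h) (4 ^ r * a)) = 2 ^ r * #(sqrtsMod h a) := by
  induction r with
  | zero => simp
  | succ r ih =>
    rw [pow_succ', mul_assoc, mul_assoc, card_sqrtsMod_four_mul, ih, pow_succ', mul_assoc]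

theorem modEq_or_modEq_neg_of_sq_modEq_sq {x y : ℤ} (hx : Odd x) (hy : Odd y) {m : ℕ}
    (hxy : x ^ 2 ≡ y ^ 2 [ZMOD 2 ^ (m + 2)]) :
    x ≡ y [ZMOD 2 ^ (m + 1)] ∨ x ≡ -y [ZMOD 2 ^ (m + 1)] := by
  obtain ⟨c, hc⟩ := hy.sub_odd hx
  obtain ⟨d, hd⟩ := hy.add_odd hx
  have hcd : (2 : ℤ) ^ m ∣ c * d := by
    rw [Int.modEq_iff_dvd, show y ^ 2 - x ^ 2 = (y - x) * (y + x) by ring, hc, hd,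
      show (2 : ℤ) ^ (m + 2) = 4 * 2 ^ m by ring, show (c + c) * (d + d) = 4 * (c * d) by ring]
      at hxy
    exact (mul_dvd_mul_iff_left (by norm_num)).mp hxy
  have hodd : ¬ 2 ∣ c ∨ ¬ 2 ∣ d := by
    by_contra! h
    obtain ⟨⟨c', rfl⟩, ⟨d', rfl⟩⟩ := h
    obtain ⟨y', hy'⟩ := hy
    omega
  rcases hodd with hc2 | hd2
  · right
    rw [Int.modEq_iff_dvd, show -y - x = -(2 * d) by omega, dvd_neg, pow_succ']
    exact mul_dvd_mul_left 2 (Int.prime_two.pow_dvd_of_dvd_mul_left m hc2 hcd)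
  · left
    rw [Int.modEq_iff_dvd, show y - x = 2 * c by omega, pow_succ']
    exact mul_dvd_mul_left 2 (Int.prime_two.pow_dvd_of_dvd_mul_right m hd2 hcd)

theorem odd_of_mem_sqrtsMod_two_pow {n : ℕ} (hn : n ≠ 0) {a k : ℤ} (ha : Odd a)
    (hk : k ∈ sqrtsMod (2 ^ n) a) : Odd k := by
  have hk2 : k ^ 2 ≡ a [ZMOD 2] := (mem_filter.mp hk).2.of_dvd (dvd_pow_self 2 hn)
  have hk2odd : Odd (k ^ 2) := Int.odd_iff.mpr (hk2.eq.trans (Int.odd_iff.mp ha))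
  exact (Int.odd_pow.mp hk2odd).resolve_right two_ne_zero

theorem card_sqrtsMod_two_pow_le_four (n : ℕ) {a : ℤ} (ha : Odd a) :
    #(sqrtsMod (2 ^ n) a) ≤ 4 := by
  obtain hn | ⟨m, rfl⟩ : n ≤ 2 ∨ ∃ m, n = m + 2 :=
    (le_or_gt n 2).imp_right fun hn => ⟨n - 2, by omega⟩
  · refine (card_filter_le _ _).trans ?_
    interval_cases n <;> simp
  obtain hempty | ⟨x₀, hx₀⟩ := (sqrtsMod (2 ^ (m + 2)) a).eq_empty_or_nonempty
  · simp [hempty]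
  have hodd : ∀ k ∈ sqrtsMod (2 ^ (m + 2)) a, Odd k :=
    fun k => odd_of_mem_sqrtsMod_two_pow (by omega) ha
  have hsub : sqrtsMod (2 ^ (m + 2)) a ⊆
      {k ∈ Icc 1 (2 * 2 ^ (m + 1)) | k ≡ x₀ [ZMOD 2 ^ (m + 1)]} ∪
        {k ∈ Icc 1 (2 * 2 ^ (m + 1)) | k ≡ -x₀ [ZMOD 2 ^ (m + 1)]} := by
    intro k hk
    have hsq : k ^ 2 ≡ x₀ ^ 2 [ZMOD 2 ^ (m + 2)] :=
      (mem_filter.mp hk).2.trans (mem_filter.mp hx₀).2.symm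
    rw [← pow_succ']
    simp only [mem_union, mem_filter, (mem_filter.mp hk).1, true_and]
    exact modEq_or_modEq_neg_of_sq_modEq_sq (hodd k hk) (hodd x₀ hx₀) hsq
  calc #(sqrtsMod (2 ^ (m + 2)) a)
      ≤ #{k ∈ Icc 1 (2 * 2 ^ (m + 1)) | k ≡ x₀ [ZMOD 2 ^ (m + 1)]} +
          #{k ∈ Icc 1 (2 * 2 ^ (m + 1)) | k ≡ -x₀ [ZMOD 2 ^ (m + 1)]} :=
        (card_le_card hsub).trans (card_union_le _ _)
    _ ≤ 2 + 2 := add_le_add (card_filter_Icc_two_mul_modEq_le_two _ _)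
        (card_filter_Icc_two_mul_modEq_le_two _ _)

theorem ncard_B (r s n : ℕ) : (B r s n).ncard = #(sqrtsMod (2 ^ n) (4 ^ r * (8 * s + 1))) := by
  rw [← Set.ncard_coe_finset, sqrtsMod, coe_filter]
  simp only [B, mem_Icc, and_assoc]

theorem card_B_general (n r s : ℕ) (h : (4 : ℤ) ^ r * (8 * s + 1) ≤ 2 ^ n) :
    (B r s n).ncard = 2 ^ r * (B 0 s (n - 2 * r)).ncard ∧
    (B r s n).ncard ≤ 2 ^ (r + 2) := by
  have hr : 2 * r ≤ n := by
    refine (pow_le_pow_iff_right₀ (by norm_num : 1 < (2 : ℤ))).mp ?_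
    calc (2 : ℤ) ^ (2 * r) = 4 ^ r * 1 := by rw [pow_mul]; norm_num
      _ ≤ 4 ^ r * (8 * s + 1) := by gcongr; omega
      _ ≤ 2 ^ n := h
  have hmod : (2 : ℤ) ^ n = 4 ^ r * 2 ^ (n - 2 * r) := by
    rw [show (4 : ℤ) = 2 ^ 2 by norm_num, ← pow_mul, ← pow_add, Nat.add_sub_cancel' hr]
  have hcard : (B r s n).ncard = 2 ^ r * #(sqrtsMod (2 ^ (n - 2 * r)) (8 * s + 1)) := by
    rw [ncard_B, hmod, card_sqrtsMod_four_pow_mul]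
  refine ⟨by rw [hcard, ncard_B, pow_zero, one_mul], ?_⟩
  calc (B r s n).ncard ≤ 2 ^ r * 4 :=
        hcard ▸ Nat.mul_le_mul_left _ (card_sqrtsMod_two_pow_le_four _ ⟨4 * s, by ring⟩)
    _ = 2 ^ (r + 2) := by ring

theorem card_B (n r s : ℕ) (hn : 1 ≤ n) (h : (4 : ℤ) ^ r * (8 * s + 1) ≤ 2 ^ n) :
    (B r s n).ncard = 2 ^ r * (B 0 s (n - 2 * r)).ncard ∧
    (B r s n).ncard ≤ 2 ^ (r + 2) :=
  card_B_general n r s h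
end

section
/- Let S be a finite alphabet, let x ∈ S^ℤ, and let m ≥ 1. Then p_x(m) ≤ (m+1) · (q_x(m))², where p_x(m) is the number of distinct words of length m occurring in x and q_x(m) = #{(x_{km}, x_{km+1}, …, x_{km+m−1}) : k ∈ ℤ} is the number of distinct m-words occurring in x at positions that are multiples of m. -/
/-- `wordCount x n` is the number of distinct words of length `n` occurring in `x`. -/
noncomputable def wordCount {S : Type*} (x : ℤ → S) (n : ℕ) : ℕ :=
  Set.ncard {w : Fin n → S | ∃ m : ℤ, ∀ i : Fin n, w i = x (m + (i : ℤ))}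

/-- `anchoredWordCount x m` is the number of distinct `m`-words occurring in `x`
at positions that are multiples of `m`. -/
noncomputable def anchoredWordCount {S : Type*} (x : ℤ → S) (m : ℕ) : ℕ :=
  Set.ncard {w : Fin m → S | ∃ k : ℤ, ∀ i : Fin m, w i = x (k * m + (i : ℤ))}

/-- Reconstruct a word from an offset `r` and two consecutive anchored words. -/
def recon {S : Type*} {m : ℕ} (r : Fin m) (u v : Fin m → S) : Fin m → S :=
  fun i => if h : (r : ℕ) + (i : ℕ) < m then u ⟨(r : ℕ) + (i : ℕ), h⟩
    else v ⟨(r : ℕ) + (i : ℕ) - m, by omega⟩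

theorem wordCount_le_anchored {S : Type*} [Finite S] (x : ℤ → S) (m : ℕ) (hm : 1 ≤ m) :
    wordCount x m ≤ (m + 1) * (anchoredWordCount x m) ^ 2 := by
  classical
  set A : Set (Fin m → S) := {w : Fin m → S | ∃ k : ℤ, ∀ i : Fin m, w i = x (k * m + (i : ℤ))}
    with hA
  set W : Set (Fin m → S) := {w : Fin m → S | ∃ a : ℤ, ∀ i : Fin m, w i = x (a + (i : ℤ))}
    with hW
  have hmZ : (0 : ℤ) < (m : ℤ) := by exact_mod_cast hm
  have key : ∀ w ∈ W, ∃ (r : Fin m) (u v : Fin m → S),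
      u ∈ A ∧ v ∈ A ∧ w = recon r u v := by
    intro w hw
    obtain ⟨a, ha⟩ := hw
    set k := a / (m : ℤ) with hk
    have hmod1 : 0 ≤ a % (m : ℤ) := Int.emod_nonneg a (by omega)
    have hmod2 : a % (m : ℤ) < m := Int.emod_lt_of_pos a hmZ
    have hsum : (m : ℤ) * k + a % (m : ℤ) = a := Int.mul_ediv_add_emod a m
    have hsum' : k * (m : ℤ) + a % (m : ℤ) = a := by rw [mul_comm]; exact hsum
    refine ⟨⟨(a % (m : ℤ)).toNat, by omega⟩,
      fun i => x (k * m + (i : ℤ)), fun i => x ((k + 1) * m + (i : ℤ)),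
      ⟨k, fun i => rfl⟩, ⟨k + 1, fun i => rfl⟩, ?_⟩
    funext i
    rw [ha i]
    have htn : ((a % (m : ℤ)).toNat : ℤ) = a % (m : ℤ) := Int.toNat_of_nonneg hmod1
    by_cases hcase : ((⟨(a % (m : ℤ)).toNat, by omega⟩ : Fin m) : ℕ) + (i : ℕ) < m
    · rw [show recon (⟨(a % (m : ℤ)).toNat, by omega⟩ : Fin m)
          (fun i => x (k * m + (i : ℤ))) (fun i => x ((k + 1) * m + (i : ℤ))) i
          = x (k * m + (((a % (m : ℤ)).toNat + (i : ℕ) : ℕ) : ℤ)) from dif_pos hcase]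
      congr 1
      push_cast [htn]
      linarith
    · rw [show recon (⟨(a % (m : ℤ)).toNat, by omega⟩ : Fin m)
          (fun i => x (k * m + (i : ℤ))) (fun i => x ((k + 1) * m + (i : ℤ))) i
          = x ((k + 1) * m + (((a % (m : ℤ)).toNat + (i : ℕ) - m : ℕ) : ℤ)) from dif_neg hcase]
      have hile : m ≤ (a % (m : ℤ)).toNat + (i : ℕ) := by
        simp only [not_lt] at hcase; exact hcase
      have hkm : (k + 1) * (m : ℤ) = k * m + m := by ring
      congr 1
      push_cast [htn, Nat.cast_sub hile]
      linarith
  -- injective map from W to Fin m × A × A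
  have hAW : A.Finite := Set.toFinite A
  have hWF : W.Finite := Set.toFinite W
  choose r u v hu hv hrec using key
  let F : W → Fin m × A × A := fun w =>
    ⟨r w w.2, ⟨u w w.2, hu w w.2⟩, ⟨v w w.2, hv w w.2⟩⟩
  have hFinj : Function.Injective F := by
    intro w₁ w₂ h
    have h1 : r w₁ w₁.2 = r w₂ w₂.2 := congrArg Prod.fst h
    have h2 : u w₁ w₁.2 = u w₂ w₂.2 := congrArg (fun p => (p.2.1 : Fin m → S)) h
    have h3 : v w₁ w₁.2 = v w₂ w₂.2 := congrArg (fun p => (p.2.2 : Fin m → S)) h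
    have : (w₁ : Fin m → S) = w₂ := by
      rw [hrec w₁ w₁.2, hrec w₂ w₂.2, h1, h2, h3]
    exact Subtype.ext this
  have hcard : Nat.card W ≤ Nat.card (Fin m × A × A) :=
    Nat.card_le_card_of_injective F hFinj
  have hcard2 : Nat.card (Fin m × A × A) = m * (A.ncard * A.ncard) := by
    rw [Nat.card_prod, Nat.card_prod, Nat.card_eq_fintype_card, Fintype.card_fin,
      Nat.card_coe_set_eq]
  have hWcard : wordCount x m = Nat.card W := (Nat.card_coe_set_eq W).symm
  have hAcard : anchoredWordCount x m = A.ncard := rfl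
  rw [hWcard, hAcard]
  calc Nat.card W ≤ m * (A.ncard * A.ncard) := by rw [← hcard2]; exact hcard
    _ ≤ (m + 1) * A.ncard ^ 2 := by nlinarith [A.ncard]
end

section
/- Let a = (a_n)_{n∈ℤ} be the sequence defined by a_n = μ(k) if n = k² for some k ∈ ℕ and a_n = 0 otherwise. Then for every n ≥ 1, the number p_a(n) of distinct words of length n occurring in a satisfies p_a(n) ≤ n² + 2n. -/
open Filter Classical

/-- The sequence `a` with `a_n = μ(k)` if `n = k²` for some `k ∈ ℕ`, and `a_n = 0`
otherwise. (When `n = k²` with `k ∈ ℕ`, one has `k = √(n.toNat)`.) -/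
noncomputable def seqA : ℤ → ℤ := fun n =>
  if ∃ k : ℕ, n = (k : ℤ) ^ 2 then ArithmeticFunction.moebius n.toNat.sqrt else 0

lemma moebius_mem (k : ℕ) : (ArithmeticFunction.moebius k : ℤ) = -1 ∨
    (ArithmeticFunction.moebius k : ℤ) = 0 ∨ (ArithmeticFunction.moebius k : ℤ) = 1 := by
  rcases eq_or_ne (ArithmeticFunction.moebius k) 0 with h | h
  · right; left; exact h
  · have hs : Squarefree k := ArithmeticFunction.moebius_ne_zero_iff_squarefree.mp h
    rw [ArithmeticFunction.moebius_apply_of_squarefree hs]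
    rcases Nat.even_or_odd (ArithmeticFunction.cardFactors k) with he | ho
    · right; right; exact he.neg_one_pow
    · left; exact ho.neg_one_pow

lemma seqA_vals (x : ℤ) : seqA x = -1 ∨ seqA x = 0 ∨ seqA x = 1 := by
  unfold seqA
  split
  · exact moebius_mem _
  · right; left; rfl

lemma seqA_neg (x : ℤ) (h : x < 0) : seqA x = 0 := by
  unfold seqA
  rw [if_neg]
  rintro ⟨k, rfl⟩
  exact absurd (sq_nonneg (k : ℤ)) (by omega)

lemma seqA_ne_zero (x : ℤ) (h : seqA x ≠ 0) :
    ∃ k : ℕ, 1 ≤ k ∧ x = (k : ℤ) ^ 2 := by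
  unfold seqA at h
  split at h
  · rename_i hc
    obtain ⟨k, hk⟩ := hc
    refine ⟨k, ?_, hk⟩
    by_contra hk0
    have : k = 0 := by omega
    subst this
    simp at hk
    subst hk
    simp at h
  · exact absurd rfl h

lemma key_aux (n : ℕ) (m : ℤ) (hn : 2 ≤ n) (hm : (n : ℤ) ^ 2 - n - 1 ≤ m)
    (i i' : Fin n) (k l : ℕ) (hk1 : 1 ≤ k) (hkl : k < l)
    (hk2 : m + (i : ℤ) = (k : ℤ) ^ 2) (hl2 : m + (i' : ℤ) = (l : ℤ) ^ 2) : False := by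
  have hi : (0 : ℤ) ≤ (i : ℤ) := Int.ofNat_nonneg _
  have hi' : ((i' : ℤ)) ≤ (n : ℤ) - 1 := by
    have := i'.isLt; omega
  have hK1 : (1 : ℤ) ≤ (k : ℤ) := by exact_mod_cast hk1
  have hKL : (k : ℤ) + 1 ≤ (l : ℤ) := by exact_mod_cast hkl
  have hN : (2 : ℤ) ≤ (n : ℤ) := by exact_mod_cast hn
  nlinarith [sq_nonneg ((l : ℤ) - k - 1), sq_nonneg ((n : ℤ) - 2 - 2 * k),
    mul_pos (lt_of_lt_of_le zero_lt_one hK1) (lt_of_lt_of_le zero_lt_one hK1)]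

lemma key (n : ℕ) (m : ℤ) (hm : (n : ℤ) ^ 2 - n - 1 ≤ m) (i i' : Fin n)
    (hi : seqA (m + i) ≠ 0) (hi' : seqA (m + i') ≠ 0) : i = i' := by
  rcases le_or_gt n 1 with hn | hn
  · have := i.isLt; have := i'.isLt
    exact Fin.ext (by omega)
  obtain ⟨k, hk1, hk2⟩ := seqA_ne_zero _ hi
  obtain ⟨l, hl1, hl2⟩ := seqA_ne_zero _ hi'
  rcases lt_trichotomy k l with h | h | h
  · exact absurd (key_aux n m hn hm i i' k l hk1 h hk2 hl2) id
  · subst h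
    have : (i : ℤ) = (i' : ℤ) := by omega
    exact Fin.ext (by exact_mod_cast this)
  · exact absurd (key_aux n m hn hm i' i l k hl1 h hl2 hk2) id

theorem wordCount_seqA_le (n : ℕ) (hn : 1 ≤ n) :
    wordCount seqA n ≤ n ^ 2 + 2 * n := by
  classical
  set M : ℤ := (n : ℤ) ^ 2 - n - 2 with hM
  set A : Set (Fin n → ℤ) :=
    (fun (m : ℤ) (i : Fin n) => seqA (m + i)) '' (Finset.Icc (1 - (n : ℤ)) M : Set ℤ) with hA
  set g : Fin n × Bool → (Fin n → ℤ) :=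
    fun p => Pi.single p.1 (if p.2 then (1 : ℤ) else -1) with hg
  set S : Set (Fin n → ℤ) := insert 0 (g '' Set.univ) with hS
  have hAfin : A.Finite := (Finset.finite_toSet _).image _
  have hSfin : S.Finite := (Set.finite_univ.image _).insert _
  have hsub : {w : Fin n → ℤ | ∃ m : ℤ, ∀ i : Fin n, w i = seqA (m + (i : ℤ))} ⊆ A ∪ S := by
    rintro w ⟨m, hw⟩
    have hwfun : w = fun i : Fin n => seqA (m + (i : ℤ)) := funext hw
    rcases le_or_gt m M with hcase | hcase
    · rcases le_or_gt m (-(n : ℤ)) with hneg | hneg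
      · right; left
        funext i
        have : m + (i : ℤ) < 0 := by
          have := i.isLt; omega
        simp [hw i, seqA_neg _ this]
      · left
        refine ⟨m, ?_, hwfun.symm⟩
        simp only [Finset.coe_Icc, Set.mem_Icc]
        omega
    · right
      have hm : (n : ℤ) ^ 2 - n - 1 ≤ m := by omega
      by_cases hz : ∀ i : Fin n, seqA (m + (i : ℤ)) = 0
      · left
        funext i
        simp [hw i, hz i]
      · push_neg at hz
        obtain ⟨j, hj⟩ := hz
        right
        have hws : w = Pi.single j (seqA (m + (j : ℤ))) := by
          funext i
          by_cases hij : i = j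
          · subst hij; simp [hw i]
          · have h0 : seqA (m + (i : ℤ)) = 0 := by
              by_contra h0
              exact hij (key n m hm i j h0 hj)
            simp [hw i, h0, Pi.single_eq_of_ne hij]
        rcases seqA_vals (m + (j : ℤ)) with hv | hv | hv
        · exact ⟨(j, false), Set.mem_univ _, by simp [hg, hws, hv]⟩
        · exact absurd hv hj
        · exact ⟨(j, true), Set.mem_univ _, by simp [hg, hws, hv]⟩
  have h1 : wordCount seqA n ≤ (A ∪ S).ncard :=
    Set.ncard_le_ncard hsub (hAfin.union hSfin)
  have h2 : (A ∪ S).ncard ≤ A.ncard + S.ncard := Set.ncard_union_le _ _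
  have hicc : (Finset.Icc (1 - (n : ℤ)) M).card = ((n : ℤ) ^ 2 - 2).toNat := by
    rw [Int.card_Icc, hM]
    congr 1
    ring
  have hAcard : A.ncard ≤ ((n : ℤ) ^ 2 - 2).toNat := by
    have h := Set.ncard_image_le (f := fun (m : ℤ) (i : Fin n) => seqA (m + i))
      (s := (Finset.Icc (1 - (n : ℤ)) M : Set ℤ)) (Finset.finite_toSet _)
    rw [Set.ncard_coe_finset, hicc] at h
    exact h
  have hScard : S.ncard ≤ 2 * n + 1 := by
    have e1 : S.ncard ≤ (g '' Set.univ).ncard + 1 := by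
      rw [hS]
      exact Set.ncard_insert_le (0 : Fin n → ℤ) _
    have e2 : (g '' Set.univ).ncard ≤ (Set.univ : Set (Fin n × Bool)).ncard :=
      Set.ncard_image_le Set.finite_univ
    have e3 : (Set.univ : Set (Fin n × Bool)).ncard = 2 * n := by
      rw [Set.ncard_univ, Nat.card_eq_fintype_card]
      simp [mul_comm]
    omega
  have hcast : ((n : ℤ) ^ 2) = ((n ^ 2 : ℕ) : ℤ) := by push_cast; ring
  have hfin : ((n : ℤ) ^ 2 - 2).toNat + (2 * n + 1) ≤ n ^ 2 + 2 * n := by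
    rw [hcast]
    have h1n : 1 ≤ n ^ 2 := Nat.one_le_pow 2 n hn
    obtain ⟨N, hN⟩ : ∃ N, n ^ 2 = N := ⟨_, rfl⟩
    rw [hN] at h1n ⊢
    omega
  calc wordCount seqA n ≤ (A ∪ S).ncard := h1
    _ ≤ A.ncard + S.ncard := h2
    _ ≤ ((n : ℤ) ^ 2 - 2).toNat + (2 * n + 1) := Nat.add_le_add hAcard hScard
    _ ≤ n ^ 2 + 2 * n := hfin
end
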